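/- Let k ≥ 1 be a fixed integer and let N : ℕ → ℕ satisfy N(d) > d > k for all large d and d/N(d) → 1/2 as d → ∞. Then Q_{d,k}(N(d)) → 1 as d → ∞. -/

import Mathlib

open Filter Finset Real Topology

namespace QAux

def S (n d : ℕ) : ℕ := ∑ i ∈ Finset.range d, n.choose i

lemma S_succ (n d : ℕ) : S n (d+1) = S n d + n.choose d := Finset.sum_range_succ _ _

lemma S_mono (n : ℕ) : Monotone (S n) := fun _ _ h =>
  Finset.sum_le_sum_of_subset (Finset.range_subset_range.2 h)

lemma S_pascal (n d : ℕ) : S (n+1) (d+1) = S n (d+1) + S n d := by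
  induction d with
  | zero => simp [S]
  | succ d ih =>
    rw [S_succ (n+1) (d+1), ih, Nat.choose_succ_succ, S_succ n (d+1), S_succ n d]
    ring

lemma S_pos (n d : ℕ) (hd : 1 ≤ d) : 1 ≤ S n d := by
  have : S n 1 ≤ S n d := S_mono n hd
  simpa [S] using this

lemma S_upper (n : ℕ) : ∀ k d, S (n+k) d ≤ 2^k * S n d := by
  intro k
  induction k with
  | zero => intro d; simp
  | succ k ih =>
    intro d
    cases d with
    | zero => simp [S]
    | succ e =>
      have h1 : S (n + (k+1)) (e+1) = S (n+k) (e+1) + S (n+k) e := by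
        have := S_pascal (n+k) e
        rw [show n + (k+1) = (n+k)+1 by ring]
        exact this
      calc S (n + (k+1)) (e+1) = S (n+k) (e+1) + S (n+k) e := h1
        _ ≤ 2^k * S n (e+1) + 2^k * S n (e+1) :=
            Nat.add_le_add (ih _) ((ih e).trans (Nat.mul_le_mul_left _ (S_mono n (Nat.le_succ e))))
        _ = 2^(k+1) * S n (e+1) := by ring

lemma S_lower (n : ℕ) : ∀ k d, 2^k * S n (d - k) ≤ S (n+k) d := by
  intro k
  induction k with
  | zero => intro d; simp
  | succ k ih =>
    intro d
    cases d with
    | zero => simp [S]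
    | succ e =>
      have h1 : S (n + (k+1)) (e+1) = S (n+k) (e+1) + S (n+k) e := by
        have := S_pascal (n+k) e
        rw [show n + (k+1) = (n+k)+1 by ring]
        exact this
      have h2 : 2^k * S n (e - k) ≤ S (n+k) e := ih e
      have h3 : S (n+k) e ≤ S (n+k) (e+1) := S_mono _ (Nat.le_succ e)
      have he : e + 1 - (k+1) = e - k := by omega
      rw [he]
      calc 2^(k+1) * S n (e-k) = 2^k * S n (e-k) + 2^k * S n (e-k) := by ring
        _ ≤ S (n+k) (e+1) + S (n+k) e := Nat.add_le_add (h2.trans h3) h2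
        _ = S (n + (k+1)) (e+1) := h1.symm

lemma choose_step (n t : ℕ) :
    ((n.choose (t+1) : ℝ)) * (t+1) = (n.choose t : ℝ) * ((n - t : ℕ) : ℝ) := by
  exact_mod_cast congrArg (Nat.cast : ℕ → ℝ) (Nat.choose_succ_right_eq n t)

lemma step_up {n t : ℕ} {ρ : ℝ} (h : ((n - t : ℕ) : ℝ) ≤ ρ * (t+1)) :
    (n.choose (t+1) : ℝ) ≤ ρ * n.choose t := by
  have hpos : (0:ℝ) < (t:ℝ) + 1 := by positivity
  rw [← mul_le_mul_iff_of_pos_right hpos, choose_step]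
  calc (n.choose t : ℝ) * ((n-t:ℕ):ℝ) ≤ (n.choose t : ℝ) * (ρ*((t:ℝ)+1)) :=
        mul_le_mul_of_nonneg_left h (by positivity)
    _ = ρ * (n.choose t : ℝ) * ((t:ℝ)+1) := by ring

lemma step_down {n t : ℕ} {ρ : ℝ} (h : ((t:ℝ)+1) ≤ ρ * ((n - t : ℕ):ℝ)) :
    (n.choose t : ℝ) ≤ ρ * n.choose (t+1) := by
  have hpos : (0:ℝ) < (t:ℝ) + 1 := by positivity
  rw [← mul_le_mul_iff_of_pos_right hpos]
  calc (n.choose t : ℝ) * ((t:ℝ)+1) ≤ (n.choose t : ℝ) * (ρ * ((n-t:ℕ):ℝ)) :=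
        mul_le_mul_of_nonneg_left h (by positivity)
    _ = ρ * ((n.choose (t+1):ℝ) * ((t:ℝ)+1)) := by rw [choose_step]; ring
    _ = ρ * (n.choose (t+1):ℝ) * ((t:ℝ)+1) := by ring

lemma iter_up {n i j : ℕ} {ρ : ℝ} (hρ : 1 ≤ ρ)
    (H : ∀ t, i ≤ t → t < j → (n.choose (t+1) : ℝ) ≤ ρ * n.choose t)
    (a : ℕ) (ha : i ≤ a) :
    ∀ b, a ≤ b → b ≤ j → (n.choose b : ℝ) ≤ ρ^(b-a) * n.choose a := by
  intro b hab
  induction b, hab using Nat.le_induction with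
  | base => intro _; simp
  | succ b hab ih =>
    intro hbj
    have hbj' : b < j := Nat.lt_of_succ_le hbj
    have h1 := H b (ha.trans hab) hbj'
    have h2 := ih (le_of_lt hbj')
    have hρ0 : (0:ℝ) ≤ ρ := by linarith
    have he : b + 1 - a = (b-a) + 1 := by omega
    rw [he, pow_succ]
    calc (n.choose (b+1):ℝ) ≤ ρ * (ρ^(b-a) * n.choose a) :=
          h1.trans (mul_le_mul_of_nonneg_left h2 hρ0)
      _ = ρ^(b-a) * ρ * n.choose a := by ring

lemma iter_down {n i j : ℕ} {ρ : ℝ} (hρ : 1 ≤ ρ)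
    (H : ∀ t, i ≤ t → t < j → (n.choose t : ℝ) ≤ ρ * n.choose (t+1))
    (a : ℕ) (ha : i ≤ a) :
    ∀ b, a ≤ b → b ≤ j → (n.choose a : ℝ) ≤ ρ^(b-a) * n.choose b := by
  intro b hab
  induction b, hab using Nat.le_induction with
  | base => intro _; simp
  | succ b hab ih =>
    intro hbj
    have hbj' : b < j := Nat.lt_of_succ_le hbj
    have h1 := H b (ha.trans hab) hbj'
    have h2 := ih (le_of_lt hbj')
    have he : b + 1 - a = (b-a) + 1 := by omega
    rw [he, pow_succ]
    calc (n.choose a : ℝ) ≤ ρ^(b-a) * n.choose b := h2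
      _ ≤ ρ^(b-a) * (ρ * n.choose (b+1)) :=
          mul_le_mul_of_nonneg_left h1 (by positivity)
      _ = ρ^(b-a) * ρ * n.choose (b+1) := by ring


lemma key (k m d n : ℕ) (ρ : ℝ) (hρ : 1 ≤ ρ) (hk : 1 ≤ k) (hm : 1 ≤ m)
    (hd : k + m + 2 ≤ d) (hn : d + 1 ≤ n)
    (hA1 : (n:ℝ) - d + 1 + ((k:ℝ)+m) ≤ ρ * ((d:ℝ) - ((k:ℝ)+m)))
    (hA2 : (d:ℝ) - 1 ≤ ρ * ((n:ℝ) - d + 2)) :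
    (S n d : ℝ) - S n (d-k) ≤ (k:ℝ) * ρ^(2*(k+m)) / m * S n (d-k) := by
  have hρ0 : (0:ℝ) ≤ ρ := by linarith
  set w := k + m with hw
  -- step inequalities on the window [d-1-w, d-1]
  have Hup : ∀ t, d-1-w ≤ t → t < d-1 → (n.choose (t+1) : ℝ) ≤ ρ * n.choose t := by
    intro t ht1 ht2
    have ht1' : d ≤ t + w + 1 := by omega
    have ht2' : t + 2 ≤ d := by omega
    have htn : t ≤ n := by omega
    have hc : ((n - t:ℕ):ℝ) = (n:ℝ) - t := by
      rw [Nat.cast_sub htn]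
    apply step_up
    rw [hc]
    have ht1r : (d:ℝ) ≤ (t:ℝ) + w + 1 := by exact_mod_cast ht1'
    have h5 : ρ*((d:ℝ) - ((k:ℝ)+m)) ≤ ρ*((t:ℝ)+1) := by
      apply mul_le_mul_of_nonneg_left _ hρ0
      have : ((w:ℕ):ℝ) = (k:ℝ)+m := by push_cast [hw]; ring
      linarith [this ▸ ht1r]
    have hwr : ((w:ℕ):ℝ) = (k:ℝ)+m := by push_cast [hw]; ring
    rw [hwr] at ht1r
    linarith [hA1, h5]
  have Hdown : ∀ t, d-1-w ≤ t → t < d-1 → (n.choose t : ℝ) ≤ ρ * n.choose (t+1) := by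
    intro t ht1 ht2
    have ht2' : t + 2 ≤ d := by omega
    have htn : t ≤ n := by omega
    have hc : ((n - t:ℕ):ℝ) = (n:ℝ) - t := by rw [Nat.cast_sub htn]
    apply step_down
    rw [hc]
    have ht2r : (t:ℝ) + 2 ≤ d := by exact_mod_cast ht2'
    have h5 : ρ*((n:ℝ)-d+2) ≤ ρ*((n:ℝ)-t) := by
      apply mul_le_mul_of_nonneg_left _ hρ0
      linarith
    linarith [hA2]
  -- tail bound
  have tailbound : ∀ it ∈ Finset.Ico (d-k) d, (n.choose it : ℝ) ≤ ρ^w * n.choose (d-1) := by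
    intro it hit
    rw [Finset.mem_Ico] at hit
    have h1 := iter_down hρ Hdown it (by omega) (d-1) (by omega) (le_refl _)
    have h2 : ρ^(d-1-it) ≤ ρ^w := pow_le_pow_right₀ hρ (by omega)
    calc (n.choose it : ℝ) ≤ ρ^(d-1-it) * n.choose (d-1) := h1
      _ ≤ ρ^w * n.choose (d-1) := mul_le_mul_of_nonneg_right h2 (by positivity)
  -- block bound
  have blockbound : ∀ it ∈ Finset.Ico (d-w) (d-k), (n.choose (d-1) : ℝ) ≤ ρ^w * n.choose it := by
    intro it hit
    rw [Finset.mem_Ico] at hit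
    have h1 := iter_up hρ Hup it (by omega) (d-1) (by omega) (le_refl _)
    have h2 : ρ^(d-1-it) ≤ ρ^w := pow_le_pow_right₀ hρ (by omega)
    calc (n.choose (d-1) : ℝ) ≤ ρ^(d-1-it) * n.choose it := h1
      _ ≤ ρ^w * n.choose it := mul_le_mul_of_nonneg_right h2 (by positivity)
  have hPpos : (0:ℝ) < ρ^w := by positivity
  set C := (n.choose (d-1) : ℝ) with hC
  have hsplitN : S n d = S n (d-k) + ∑ i ∈ Finset.Ico (d-k) d, n.choose i := by
    rw [S, S, Finset.range_eq_Ico]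
    rw [Finset.range_eq_Ico]; exact (Finset.sum_Ico_consecutive (fun i => n.choose i) (Nat.zero_le (d-k)) (by omega : d - k ≤ d)).symm
  have hsplit : (S n d : ℝ) = (S n (d-k) : ℝ) + ∑ i ∈ Finset.Ico (d-k) d, (n.choose i:ℝ) := by
    rw [hsplitN]; push_cast; ring
  have hT : ∑ i ∈ Finset.Ico (d-k) d, (n.choose i:ℝ) ≤ (k:ℝ) * (ρ^w * C) := by
    have h := Finset.sum_le_card_nsmul (Finset.Ico (d-k) d) _ (ρ^w * C) tailbound
    rw [Nat.card_Ico] at h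
    have hcard : d - (d-k) = k := by omega
    rw [hcard] at h
    simpa [nsmul_eq_mul] using h
  have hB : (m:ℝ) * (C / ρ^w) ≤ (S n (d-k) : ℝ) := by
    have h1 : ∀ it ∈ Finset.Ico (d-w) (d-k), C / ρ^w ≤ (n.choose it : ℝ) := by
      intro it hit
      rw [div_le_iff₀ hPpos]
      have := blockbound it hit
      linarith [this]
    have h2 := Finset.card_nsmul_le_sum (Finset.Ico (d-w) (d-k)) _ _ h1
    rw [Nat.card_Ico] at h2
    have hcard : d - k - (d-w) = m := by omega
    rw [hcard] at h2
    have h3 : ∑ it ∈ Finset.Ico (d-w) (d-k), (n.choose it : ℝ) ≤ (S n (d-k) : ℝ) := by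
      have : (S n (d-k) : ℝ) = ∑ i ∈ Finset.range (d-k), (n.choose i : ℝ) := by
        rw [S]; push_cast; ring
      rw [this]
      apply Finset.sum_le_sum_of_subset_of_nonneg
      · intro x hx
        rw [Finset.mem_Ico] at hx
        rw [Finset.mem_range]
        omega
      · intro i _ _; positivity
    calc (m:ℝ) * (C / ρ^w) = m • (C / ρ^w) := by simp [nsmul_eq_mul]
      _ ≤ ∑ it ∈ Finset.Ico (d-w) (d-k), (n.choose it : ℝ) := h2
      _ ≤ _ := h3
  have hmpos : (0:ℝ) < m := by exact_mod_cast hm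
  have hC7 : C ≤ (S n (d-k) : ℝ) * (ρ^w / m) := by
    have h6 : (m:ℝ) * (C / ρ^w) * (ρ^w / m) ≤ (S n (d-k) : ℝ) * (ρ^w / m) :=
      mul_le_mul_of_nonneg_right hB (by positivity)
    have h7 : (m:ℝ) * (C / ρ^w) * (ρ^w / m) = C := by
      field_simp
    linarith [h6, h7 ▸ h6]
  calc (S n d : ℝ) - S n (d-k) = ∑ i ∈ Finset.Ico (d-k) d, (n.choose i:ℝ) := by
        rw [hsplit]; ring
    _ ≤ (k:ℝ) * (ρ^w * C) := hT
    _ ≤ (k:ℝ) * (ρ^w * ((S n (d-k) : ℝ) * (ρ^w / m))) := by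
        apply mul_le_mul_of_nonneg_left _ (by positivity)
        exact mul_le_mul_of_nonneg_left hC7 (le_of_lt hPpos)
    _ = (k:ℝ) * ρ^(2*w) / m * S n (d-k) := by
        rw [two_mul, pow_add]; field_simp; ring


end QAux

open QAux

/-- `Q d k N = 2^k · (Σ_{i=0}^{d-k-1} C(N-k-1, i)) / (Σ_{i=0}^{d-1} C(N-1, i))`,
the normalized expected `k`-face number `E f_k(C_N)/C(N,k)` of the Cover–Efron cone. -/
noncomputable def Q (d k N : ℕ) : ℝ :=
  2 ^ k * (∑ i ∈ Finset.range (d - k), ((N - k - 1).choose i : ℝ)) /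
    (∑ i ∈ Finset.range d, ((N - 1).choose i : ℝ))

theorem Q_tendsto_one_of_half (k : ℕ) (hk : 1 ≤ k) (N : ℕ → ℕ)
    (hN : ∀ᶠ d in atTop, k < d ∧ d < N d)
    (hlim : Tendsto (fun d : ℕ => (d : ℝ) / (N d : ℝ)) atTop (𝓝 (1 / 2))) :
    Tendsto (fun d : ℕ => Q d k (N d)) atTop (𝓝 1) := by
  have hN2 : Tendsto (fun d : ℕ => (N d : ℝ) / d) atTop (𝓝 2) := by
    have h := hlim.inv₀ (by norm_num : (1:ℝ)/2 ≠ 0)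
    have h2 : ((1:ℝ)/2)⁻¹ = 2 := by norm_num
    rw [h2] at h
    refine h.congr (fun d => ?_)
    simp [inv_div]
  have hbig : ∀ᶠ d : ℕ in atTop, d + k + 2 ≤ N d := by
    have h32 := hN2.eventually (eventually_ge_nhds (by norm_num : (3/2:ℝ) < 2))
    filter_upwards [h32, eventually_ge_atTop (2*(k+2))] with d h1 h2
    have hd0 : (0:ℝ) < d := by
      have : 1 ≤ d := by omega
      exact_mod_cast this
    have h3 : (3/2:ℝ) * d ≤ N d := by
      rw [le_div_iff₀ hd0] at h1
      linarith
    have h4 : ((2*(k+2):ℕ):ℝ) ≤ d := by exact_mod_cast h2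
    have : ((d + k + 2 : ℕ):ℝ) ≤ (N d : ℝ) := by push_cast at h4 ⊢; linarith
    exact_mod_cast this
  -- the lower comparison function
  have hr : Tendsto (fun d : ℕ =>
      ((S (N d - k - 1) (d-k) : ℝ) / (S (N d - k - 1) d : ℝ))) atTop (𝓝 1) := by
    rw [Metric.tendsto_atTop]
    intro ε hε
    set m : ℕ := ⌈(2*k:ℝ)/ε⌉₊ + 1 with hmdef
    have hm1 : 1 ≤ m := by omega
    have hw0 : (0:ℝ) < ((2*(k+m):ℕ):ℝ) := by
      have : 1 ≤ 2*(k+m) := by omega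
      exact_mod_cast this
    set ρ : ℝ := (2:ℝ) ^ (((2*(k+m):ℕ):ℝ))⁻¹ with hρdef
    have hρ1 : 1 < ρ := by
      rw [hρdef]
      refine (Real.one_lt_rpow_iff_of_pos (by norm_num)).2 (Or.inl ⟨by norm_num, ?_⟩)
      positivity
    have hρ0 : (0:ℝ) < ρ := by linarith
    have hρpow : ρ ^ (2*(k+m)) = 2 := by
      rw [hρdef, ← Real.rpow_natCast ((2:ℝ) ^ (((2*(k+m):ℕ):ℝ))⁻¹) (2*(k+m)),
        ← Real.rpow_mul (by norm_num), inv_mul_cancel₀ (ne_of_gt hw0), Real.rpow_one]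
    -- eventual linear bounds
    have hub := hN2.eventually (eventually_le_nhds (show (2:ℝ) < (3+ρ)/2 by linarith))
    have hlb := hN2.eventually (eventually_ge_nhds
      (show (3*ρ+1)/(2*ρ) < 2 by rw [div_lt_iff₀ (by linarith : (0:ℝ) < 2*ρ)]; linarith))
    have hgrow : Tendsto (fun d : ℕ => ((ρ-1)/2) * (d:ℝ)) atTop atTop :=
      tendsto_natCast_atTop_atTop.const_mul_atTop (by linarith)
    have h4 := hgrow.eventually_ge_atTop ((m:ℝ) + ρ*(k+m))
    have h5 := hgrow.eventually_ge_atTop (ρ*k)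
    have hεm : (k:ℝ) * 2 / m < ε := by
      have hmr : (2*k:ℝ)/ε < m := by
        have h1 : (2*k:ℝ)/ε ≤ ⌈(2*k:ℝ)/ε⌉₊ := Nat.le_ceil _
        have h2 : ((⌈(2*k:ℝ)/ε⌉₊ : ℕ) : ℝ) < m := by
          rw [hmdef]; push_cast; linarith
        linarith
      have hm0 : (0:ℝ) < m := by exact_mod_cast hm1
      rw [div_lt_iff₀ hm0]
      rw [div_lt_iff₀ hε] at hmr
      linarith
    have Hev : ∀ᶠ d : ℕ in atTop,
        dist ((S (N d - k - 1) (d-k) : ℝ) / (S (N d - k - 1) d : ℝ)) 1 < ε := by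
      filter_upwards [hbig, hub, hlb, h4, h5, hN, eventually_ge_atTop (k+m+2)]
        with d hbig' hub' hlb' h4' h5' hNd hd2
      obtain ⟨hkd, hdN⟩ := hNd
      set n : ℕ := N d - k - 1 with hn
      have hd0 : (0:ℝ) < d := by
        have : 1 ≤ d := by omega
        exact_mod_cast this
      have hubl : (N d : ℝ) ≤ (3+ρ)/2 * d := by
        rw [div_le_iff₀ hd0] at hub'
        linarith
      have hlbl : (3*ρ+1)/2 * d ≤ ρ * N d := by
        rw [le_div_iff₀ hd0] at hlb'
        have h := mul_le_mul_of_nonneg_left hlb' (le_of_lt hρ0)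
        have heq : ρ * ((3*ρ+1)/(2*ρ) * d) = (3*ρ+1)/2 * (d:ℝ) := by
          field_simp
        linarith [heq ▸ h]
      have hnd : d + 1 ≤ n := by omega
      have hnr : (n:ℝ) = (N d : ℝ) - k - 1 := by
        rw [hn, Nat.cast_sub (show 1 ≤ N d - k by omega), Nat.cast_sub (show k ≤ N d by omega)]
        push_cast
        ring
      have hA1 : (n:ℝ) - d + 1 + ((k:ℝ)+m) ≤ ρ * ((d:ℝ) - ((k:ℝ)+m)) := by
        rw [hnr]
        nlinarith [hubl, h4']
      have hA2 : (d:ℝ) - 1 ≤ ρ * ((n:ℝ) - d + 2) := by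
        rw [hnr]
        nlinarith [hlbl, h5']
      have hkey := key k m d n ρ (le_of_lt hρ1) hk hm1 (by omega) hnd hA1 hA2
      rw [hρpow] at hkey
      have hSd : (0:ℝ) < S n d := by
        have := S_pos n d (by omega)
        exact_mod_cast this
      have hSdk : (0:ℝ) < S n (d-k) := by
        have := S_pos n (d-k) (by omega)
        exact_mod_cast this
      have hmon : (S n (d-k):ℝ) ≤ S n d := by
        exact_mod_cast S_mono n (by omega : d-k ≤ d)
      have hratio : 1 - (S n (d-k):ℝ)/(S n d) < ε := by
        have e1 : 1 - (S n (d-k):ℝ)/(S n d) = ((S n d:ℝ) - S n (d-k))/(S n d) := by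
          field_simp
        rw [e1]
        have e2 : ((S n d:ℝ) - S n (d-k))/(S n d) ≤ ((S n d:ℝ) - S n (d-k))/(S n (d-k)) := by
          apply div_le_div_of_nonneg_left _ hSdk hmon
          linarith
        have e3 : ((S n d:ℝ) - S n (d-k))/(S n (d-k)) ≤ (k:ℝ)*2/m := by
          rw [div_le_iff₀ hSdk]
          exact hkey
        linarith
      have hle1 : (S n (d-k):ℝ)/(S n d) ≤ 1 := by
        rw [div_le_one hSd]
        exact hmon
      rw [Real.dist_eq, abs_of_nonpos (by linarith), neg_sub]
      exact hratio
    rcases (eventually_atTop.1 Hev) with ⟨M, hM⟩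
    exact ⟨M, hM⟩
  -- sandwich
  have hub_Q : ∀ᶠ d : ℕ in atTop, Q d k (N d) ≤ 1 := by
    filter_upwards [hN, hbig] with d hNd hb
    obtain ⟨hkd, hdN⟩ := hNd
    set n : ℕ := N d - k - 1 with hn
    have e1 : Q d k (N d) = (2:ℝ)^k * (S n (d-k) : ℝ) / (S (n+k) d : ℝ) := by
      rw [Q, show N d - 1 = n + k from by omega]
      simp only [S]
      push_cast
      ring
    have hpos : (0:ℝ) < (S (n+k) d : ℝ) := by
      have := S_pos (n+k) d (by omega)
      exact_mod_cast this
    rw [e1, div_le_one hpos]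
    have := S_lower n k d
    have h2 : ((2^k * S n (d-k) : ℕ):ℝ) ≤ ((S (n+k) d : ℕ):ℝ) := by exact_mod_cast this
    push_cast at h2
    linarith
  have hlb_Q : ∀ᶠ d : ℕ in atTop,
      ((S (N d - k - 1) (d-k) : ℝ) / (S (N d - k - 1) d : ℝ)) ≤ Q d k (N d) := by
    filter_upwards [hN, hbig] with d hNd hb
    obtain ⟨hkd, hdN⟩ := hNd
    set n : ℕ := N d - k - 1 with hn
    have e1 : Q d k (N d) = (2:ℝ)^k * (S n (d-k) : ℝ) / (S (n+k) d : ℝ) := by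
      rw [Q, show N d - 1 = n + k from by omega]
      simp only [S]
      push_cast
      ring
    have hpos : (0:ℝ) < (S (n+k) d : ℝ) := by
      have := S_pos (n+k) d (by omega)
      exact_mod_cast this
    have hSd : (0:ℝ) < S n d := by
      have := S_pos n d (by omega)
      exact_mod_cast this
    have h1 : (S (n+k) d:ℝ) ≤ 2^k * S n d := by
      have := S_upper n k d
      have h2 : ((S (n+k) d : ℕ):ℝ) ≤ ((2^k * S n d : ℕ):ℝ) := by exact_mod_cast this
      push_cast at h2
      linarith
    rw [e1]
    have e2 : (S n (d-k):ℝ)/(S n d) = ((2:ℝ)^k * S n (d-k))/((2:ℝ)^k * S n d) := by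
      rw [mul_div_mul_left _ _ (by positivity : ((2:ℝ)^k) ≠ 0)]
    rw [e2]
    apply div_le_div_of_nonneg_left _ hpos h1
    positivity
  exact tendsto_of_tendsto_of_tendsto_of_le_of_le' hr tendsto_const_nhds hlb_Q hub_Q
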